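/- arXiv:1607.04130 — 7 statements merged into one kernel-verified Lean document; each statement's English description precedes it below -/
import Mathlib

section
/- For every real p ≥ 2 and all real numbers a, b, the quantity max(|a|^{p-1}|b|, |a||b|^{p-1}) is at most |(|a|^p + |b|^p - |a-b|^p)|, which in turn is at most (1 + p·2^{p-1})·max(|a|^{p-1}|b|, |a||b|^{p-1}). -/
/-!
By symmetry assume `|b| ≤ |a|`; then the maximum is `|a| ^ (p - 1) * |b|`. According to whether
`a` and `b` have the same sign, `|a - b|` is `|a| - |b|` or `|a| + |b|`, so with `x = |a|`,
`y = |b|` one has to compare `x ^ p + y ^ p - (x - y) ^ p` or `(x + y) ^ p - x ^ p - y ^ p` with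
`x ^ (p - 1) * y`. Both are controlled by the tangent-line inequality for the convex function
`t ↦ t ^ p` (at `x`, resp. at `x` and `x + y`), together with `y ^ p ≤ x ^ (p - 1) * y` and
`x + y ≤ 2 * x`.
-/

theorem abs_sub_eq_abs_sub_abs_or_add (a b : ℝ) :
    |a - b| = |(|a| - |b|)| ∨ |a - b| = |a| + |b| := by
  rcases le_total 0 a with ha | ha <;> rcases le_total 0 b with hb | hb
  · left; rw [abs_of_nonneg ha, abs_of_nonneg hb]
  · right; rw [abs_of_nonneg ha, abs_of_nonpos hb, abs_of_nonneg (by linarith)]; ring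
  · right; rw [abs_of_nonpos ha, abs_of_nonneg hb, abs_of_nonpos (by linarith)]; ring
  · left; rw [abs_of_nonpos ha, abs_of_nonpos hb, ← abs_neg]; ring_nf

namespace Real

variable {p x y : ℝ}

theorem rpow_eq_rpow_sub_one_mul (hx : 0 ≤ x) (hp : p ≠ 0) : x ^ p = x ^ (p - 1) * x := by
  simpa using rpow_add_one' hx (y := p - 1) (by simpa using hp)

-- Bernoulli's inequality for `s = x / y - 1`, multiplied by `y ^ p`.
theorem tangent_le_rpow (hp : 1 ≤ p) (hx : 0 ≤ x) (hy : 0 ≤ y) :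
    y ^ p + p * y ^ (p - 1) * (x - y) ≤ x ^ p := by
  rcases hy.eq_or_lt with rfl | hy
  · rcases hp.eq_or_lt with rfl | hp
    · simp
    · simp [zero_rpow (by linarith : p ≠ 0), zero_rpow (by linarith : p - 1 ≠ 0), rpow_nonneg hx]
  · have bernoulli := one_add_mul_self_le_rpow_one_add (s := x / y - 1)
      (by linarith [div_nonneg hx hy.le]) hp
    rw [add_sub_cancel, div_rpow hx hy.le, le_div_iff₀ (rpow_pos_of_pos hy p)] at bernoulli
    calc y ^ p + p * y ^ (p - 1) * (x - y) = (1 + p * (x / y - 1)) * y ^ p := by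
          rw [rpow_sub_one hy.ne']; field_simp
      _ ≤ x ^ p := bernoulli

theorem rpow_le_rpow_sub_one_mul (hp : 1 ≤ p) (hy : 0 ≤ y) (hyx : y ≤ x) :
    y ^ p ≤ x ^ (p - 1) * y := by
  rw [rpow_eq_rpow_sub_one_mul hy (by linarith)]
  gcongr

theorem mul_rpow_sub_one_le_rpow_sub_one_mul (hp : 2 ≤ p) (hy : 0 ≤ y) (hyx : y ≤ x) :
    x * y ^ (p - 1) ≤ x ^ (p - 1) * y := by
  have hx := hy.trans hyx
  have split (z : ℝ) (hz : 0 ≤ z) : z ^ (p - 1) = z ^ (p - 2) * z := by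
    rw [← rpow_add_one' hz (by linarith)]; ring_nf
  rw [split x hx, split y hy]
  have : y ^ (p - 2) ≤ x ^ (p - 2) := rpow_le_rpow hy hyx (by linarith)
  nlinarith [mul_le_mul_of_nonneg_left this (mul_nonneg hx hy)]

theorem rpow_add_rpow_sub_sub_rpow_bounds (hp : 1 ≤ p) (hy : 0 ≤ y) (hyx : y ≤ x) :
    x ^ (p - 1) * y ≤ x ^ p + y ^ p - (x - y) ^ p ∧
      x ^ p + y ^ p - (x - y) ^ p ≤ (1 + p) * (x ^ (p - 1) * y) := by
  have hx := hy.trans hyx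
  constructor
  · have : (x - y) ^ (p - 1) ≤ x ^ (p - 1) := rpow_le_rpow (by linarith) (by linarith) (by linarith)
    have hxy := rpow_eq_rpow_sub_one_mul (sub_nonneg.2 hyx) (by linarith : p ≠ 0)
    have hx' := rpow_eq_rpow_sub_one_mul hx (by linarith : p ≠ 0)
    nlinarith [mul_le_mul_of_nonneg_right this (sub_nonneg.2 hyx), rpow_nonneg hy p]
  · have := tangent_le_rpow hp (sub_nonneg.2 hyx) hx
    nlinarith [rpow_le_rpow_sub_one_mul hp hy hyx]

theorem add_rpow_sub_rpow_sub_rpow_bounds (hp : 1 ≤ p) (hy : 0 ≤ y) (hyx : y ≤ x) :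
    (p - 1) * (x ^ (p - 1) * y) ≤ (x + y) ^ p - x ^ p - y ^ p ∧
      (x + y) ^ p - x ^ p - y ^ p ≤ p * 2 ^ (p - 1) * (x ^ (p - 1) * y) := by
  have hx := hy.trans hyx
  constructor
  · have := tangent_le_rpow hp (add_nonneg hx hy) hx
    nlinarith [rpow_le_rpow_sub_one_mul hp hy hyx]
  · have tangent := tangent_le_rpow hp hx (add_nonneg hx hy)
    have : (x + y) ^ (p - 1) ≤ 2 ^ (p - 1) * x ^ (p - 1) := by
      rw [← mul_rpow zero_le_two hx]
      exact rpow_le_rpow (by linarith) (by linarith) (by linarith)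
    nlinarith [mul_le_mul_of_nonneg_left this (mul_nonneg (by linarith : 0 ≤ p) hy),
      rpow_nonneg hy p]

end Real

open Real

/-- For p ≥ 2 and all reals a, b:
max(|a|^{p-1}|b|, |a||b|^{p-1}) ≤ | |a|^p + |b|^p - |a-b|^p |
  ≤ (1 + p·2^{p-1}) · max(|a|^{p-1}|b|, |a||b|^{p-1}). -/
theorem stmt0 (p : ℝ) (hp : 2 ≤ p) (a b : ℝ) :
    max (|a| ^ (p - 1) * |b|) (|a| * |b| ^ (p - 1)) ≤
      |(|a| ^ p + |b| ^ p - |a - b| ^ p)| ∧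
    |(|a| ^ p + |b| ^ p - |a - b| ^ p)| ≤
      (1 + p * 2 ^ (p - 1)) * max (|a| ^ (p - 1) * |b|) (|a| * |b| ^ (p - 1)) := by
  wlog hba : |b| ≤ |a| generalizing a b
  · have := this b a (le_of_not_ge hba)
    rwa [abs_sub_comm b a, add_comm (|b| ^ p), max_comm, mul_comm (|b| ^ (p - 1)),
      mul_comm |b|] at this
  have hb := abs_nonneg b
  have hM : 0 ≤ |a| ^ (p - 1) * |b| := by positivity
  have two_rpow : 1 ≤ (2 : ℝ) ^ (p - 1) := one_le_rpow one_le_two (by linarith)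
  rw [max_eq_left (mul_rpow_sub_one_le_rpow_sub_one_mul hp hb hba)]
  rcases abs_sub_eq_abs_sub_abs_or_add a b with h | h
  · obtain ⟨lower, upper⟩ := rpow_add_rpow_sub_sub_rpow_bounds (p := p) (by linarith) hb hba
    rw [h, abs_of_nonneg (sub_nonneg.2 hba), abs_of_nonneg (hM.trans lower)]
    exact ⟨lower, upper.trans (by nlinarith)⟩
  · obtain ⟨lower, upper⟩ := add_rpow_sub_rpow_sub_rpow_bounds (p := p) (by linarith) hb hba
    have hneg : |a| ^ p + |b| ^ p - (|a| + |b|) ^ p ≤ 0 := by nlinarith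
    rw [h, abs_of_nonpos hneg]
    constructor <;> nlinarith
end

section
/- For every real p ≥ 3 and all real numbers a, b, one has |a|^p + |b|^p - |a-b|^p ≤ p·({a}^{p-1}·b + a·{b}^{p-1}), where {x}^{p-1} = sign(x)|x|^{p-1}. -/
open Real

/-- Scaled Bernoulli: for q ≥ 1, a > 0, c ≥ 0: a^q + q a^(q-1) c ≤ (a+c)^q. -/
lemma bern_add {q a c : ℝ} (hq : 1 ≤ q) (ha : 0 < a) (hc : 0 ≤ c) :
    a ^ q + q * a ^ (q - 1) * c ≤ (a + c) ^ q := by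
  have hs : (-1 : ℝ) ≤ c / a := by
    have : (0:ℝ) ≤ c / a := by positivity
    linarith
  have h := one_add_mul_self_le_rpow_one_add hs hq
  have haq : (0:ℝ) < a ^ q := Real.rpow_pos_of_pos ha q
  have key : a ^ q * (1 + q * (c / a)) ≤ a ^ q * (1 + c / a) ^ q :=
    mul_le_mul_of_nonneg_left h haq.le
  have h2 : a ^ q * (1 + c / a) ^ q = (a + c) ^ q := by
    rw [← Real.mul_rpow ha.le (by positivity)]
    congr 1
    field_simp
  have h3 : a ^ (q - 1) = a ^ q / a := by
    rw [Real.rpow_sub ha, Real.rpow_one]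
  rw [h2] at key
  calc a ^ q + q * a ^ (q - 1) * c = a ^ q * (1 + q * (c / a)) := by
        rw [h3]; field_simp
    _ ≤ (a + c) ^ q := key

lemma bern_sub {q a b : ℝ} (hq : 1 ≤ q) (ha : 0 < a) (hb : 0 ≤ b) (hba : b ≤ a) :
    a ^ q - q * a ^ (q - 1) * b ≤ (a - b) ^ q := by
  have hs : (-1 : ℝ) ≤ -(b / a) := by
    rw [neg_le_neg_iff]
    exact (div_le_one ha).2 hba
  have h := one_add_mul_self_le_rpow_one_add hs hq
  have haq : (0:ℝ) < a ^ q := Real.rpow_pos_of_pos ha q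
  have key : a ^ q * (1 + q * -(b / a)) ≤ a ^ q * (1 + -(b / a)) ^ q :=
    mul_le_mul_of_nonneg_left h haq.le
  have h1 : (0:ℝ) ≤ 1 + -(b/a) := by
    have := (div_le_one ha).2 hba; linarith
  have h2 : a ^ q * (1 + -(b / a)) ^ q = (a - b) ^ q := by
    rw [← Real.mul_rpow ha.le h1]
    congr 1
    field_simp
    ring
  have h3 : a ^ (q - 1) = a ^ q / a := by
    rw [Real.rpow_sub ha, Real.rpow_one]
  rw [h2] at key
  calc a ^ q - q * a ^ (q - 1) * b = a ^ q * (1 + q * -(b / a)) := by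
        rw [h3]; field_simp; ring
    _ ≤ (a - b) ^ q := key

/-- Positive case: 0 < b ≤ a, p ≥ 3. -/
lemma pos_case {p a b : ℝ} (hp : 3 ≤ p) (hb : 0 < b) (hba : b ≤ a) :
    a ^ p + b ^ p - (a - b) ^ p ≤ p * (a ^ (p - 1) * b + a * b ^ (p - 1)) := by
  have ha : 0 < a := hb.trans_le hba
  have h1 := bern_sub (q := p) (by linarith) ha hb.le hba
  have h2 : b ^ p ≤ p * (a * b ^ (p - 1)) := by
    have hb1 : b ^ p = b ^ (p - 1) * b := by
      rw [show p = (p-1) + 1 by ring, Real.rpow_add_one hb.ne']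
      ring_nf
    have hbp : (0:ℝ) < b ^ (p-1) := Real.rpow_pos_of_pos hb _
    rw [hb1]
    nlinarith [mul_le_mul_of_nonneg_left hba hbp.le,
      mul_nonneg (mul_nonneg (by linarith : (0:ℝ) ≤ p - 1) ha.le) hbp.le]
  linarith

/-- Negative case: 0 < c ≤ a, p ≥ 3. -/
lemma neg_case {p a c : ℝ} (hp : 3 ≤ p) (hc : 0 < c) (hca : c ≤ a) :
    a ^ p + c ^ p + p * (a ^ (p - 1) * c + a * c ^ (p - 1)) ≤ (a + c) ^ p := by
  have ha' : 0 < a := hc.trans_le hca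
  have hXa1 : a ^ (p - 2) = a ^ (p - 3) * a := by
    rw [← Real.rpow_add_one ha'.ne']; congr 1; ring
  have hXa2 : a ^ (p - 1) = a ^ (p - 3) * a * a := by
    rw [← Real.rpow_add_one ha'.ne', ← Real.rpow_add_one ha'.ne']; congr 1; ring
  have hXa3 : a ^ p = a ^ (p - 3) * a * a * a := by
    rw [← Real.rpow_add_one ha'.ne', ← Real.rpow_add_one ha'.ne',
      ← Real.rpow_add_one ha'.ne']; congr 1; ring
  have hYc2 : c ^ (p - 1) = c ^ (p - 3) * c * c := by
    rw [← Real.rpow_add_one hc.ne', ← Real.rpow_add_one hc.ne']; congr 1; ring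
  have hYc3 : c ^ p = c ^ (p - 3) * c * c * c := by
    rw [← Real.rpow_add_one hc.ne', ← Real.rpow_add_one hc.ne',
      ← Real.rpow_add_one hc.ne']; congr 1; ring
  have hcmp : c ^ (p - 3) ≤ a ^ (p - 3) := Real.rpow_le_rpow hc.le hca (by linarith)
  set X := a ^ (p - 3) with hXdef
  set Y := c ^ (p - 3) with hYdef
  have hXpos : 0 < X := Real.rpow_pos_of_pos ha' _
  have hYpos : 0 < Y := Real.rpow_pos_of_pos hc _
  have hb := bern_add (q := p - 2) (a := a) (c := c) (by linarith) ha' hc.le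
  rw [hXa1, show p - 2 - 1 = p - 3 by ring, ← hXdef] at hb
  have hAC : (a + c) ^ p = (a + c) ^ (p - 2) * ((a + c) * (a + c)) := by
    rw [show p = (p-2) + 1 + 1 by ring, Real.rpow_add_one (by positivity),
      Real.rpow_add_one (by positivity)]
    ring
  have key : (X * a + (p - 2) * X * c) * ((a + c) * (a + c)) ≤ (a + c) ^ p := by
    rw [hAC]
    exact mul_le_mul_of_nonneg_right hb (by positivity)
  rw [hXa3, hYc3, hXa2, hYc2]
  refine le_trans ?_ key
  nlinarith [mul_nonneg (sub_nonneg.2 hcmp) (by positivity : (0:ℝ) ≤ c * c * c),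
    mul_nonneg (sub_nonneg.2 hcmp) (by positivity : (0:ℝ) ≤ a * c * c),
    mul_nonneg (mul_nonneg (by linarith : (0:ℝ) ≤ p - 3) hXpos.le)
      (by positivity : (0:ℝ) ≤ a * c * c),
    mul_nonneg (mul_nonneg (by linarith : (0:ℝ) ≤ p - 3) hXpos.le)
      (by positivity : (0:ℝ) ≤ c * c * c)]

/-- Main statement for 0 ≤ a, |b| ≤ a. -/
lemma main3 (p : ℝ) (hp : 3 ≤ p) (a b : ℝ) (ha : 0 ≤ a) (hb : |b| ≤ a) :
    |a| ^ p + |b| ^ p - |a - b| ^ p ≤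
      p * (Real.sign a * |a| ^ (p - 1) * b + a * (Real.sign b * |b| ^ (p - 1))) := by
  rcases eq_or_lt_of_le ha with rfl | ha'
  · have hb0 : b = 0 := by
      have := abs_nonneg b; have : |b| = 0 := le_antisymm hb (abs_nonneg b)
      exact abs_eq_zero.mp this
    subst hb0
    simp [Real.sign_zero, Real.zero_rpow (by linarith : p ≠ 0)]
  · rw [abs_of_pos ha', Real.sign_of_pos ha']
    rcases lt_trichotomy b 0 with hbneg | rfl | hbpos
    · obtain ⟨c, rfl⟩ : ∃ c, b = -c := ⟨-b, (neg_neg b).symm⟩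
      have hc : 0 < c := by linarith
      have hbc : |(-c)| = c := by rw [abs_neg, abs_of_pos hc]
      have hca : c ≤ a := by rw [hbc] at hb; exact hb
      rw [hbc, Real.sign_of_neg hbneg, show a - -c = a + c by ring,
        abs_of_pos (by linarith : (0:ℝ) < a + c)]
      have h := neg_case hp hc hca
      nlinarith [h]
    · simp [Real.sign_zero, Real.zero_rpow (by linarith : p ≠ 0),
        abs_of_pos ha', Real.rpow_natCast]
    · have hba : b ≤ a := le_trans (le_abs_self b) hb
      have habs : |a - b| = a - b := abs_of_nonneg (by linarith)
      rw [abs_of_pos hbpos, habs, Real.sign_of_pos hbpos]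
      have := pos_case hp hbpos hba
      nlinarith [this]

/-- Main statement for |b| ≤ |a|. -/
lemma main2 (p : ℝ) (hp : 3 ≤ p) (a b : ℝ) (hb : |b| ≤ |a|) :
    |a| ^ p + |b| ^ p - |a - b| ^ p ≤
      p * (Real.sign a * |a| ^ (p - 1) * b + a * (Real.sign b * |b| ^ (p - 1))) := by
  rcases le_total 0 a with ha | ha
  · exact main3 p hp a b ha (hb.trans_eq (abs_of_nonneg ha))
  · have h := main3 p hp (-a) (-b) (by linarith) (by rw [abs_neg, show -a = |a| from (abs_of_nonpos ha).symm]; exact hb)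
    rw [abs_neg, abs_neg, Real.sign_neg, Real.sign_neg,
      show -a - -b = -(a - b) by ring, abs_neg] at h
    calc |a| ^ p + |b| ^ p - |a - b| ^ p
        ≤ p * (-Real.sign a * |a| ^ (p - 1) * -b + -a * (-Real.sign b * |b| ^ (p - 1))) := h
      _ = p * (Real.sign a * |a| ^ (p - 1) * b + a * (Real.sign b * |b| ^ (p - 1))) := by ring

/-- For p ≥ 3 and all reals a, b:
|a|^p + |b|^p - |a-b|^p ≤ p·({a}^{p-1}·b + a·{b}^{p-1}),
where {x}^{p-1} = sign(x)·|x|^{p-1}. -/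
theorem stmt1 (p : ℝ) (hp : 3 ≤ p) (a b : ℝ) :
    |a| ^ p + |b| ^ p - |a - b| ^ p ≤
      p * (Real.sign a * |a| ^ (p - 1) * b + a * (Real.sign b * |b| ^ (p - 1))) := by
  rcases le_total (|b|) (|a|) with h | h
  · exact main2 p hp a b h
  · have h2 := main2 p hp b a h
    rw [abs_sub_comm b a] at h2
    calc |a| ^ p + |b| ^ p - |a - b| ^ p
        = |b| ^ p + |a| ^ p - |a - b| ^ p := by ring
      _ ≤ p * (Real.sign b * |b| ^ (p - 1) * a + b * (Real.sign a * |a| ^ (p - 1))) := h2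
      _ = p * (Real.sign a * |a| ^ (p - 1) * b + a * (Real.sign b * |b| ^ (p - 1))) := by ring
end

section
/- Let G be a finite connected graph with E edges, and let 2 ≤ p' ≤ p. Then λ_{1,p}(G) ≥ E^{1-p/p'}·λ_{1,p'}(G)^{p/p'}, where λ_{1,p}(G) is the first positive eigenvalue of the graph p-Laplacian. -/
open Finset

/-- The valency (degree) of a vertex `u` in the multigraph with edge set `E`,
each edge `e` having endpoints `(ends e).1` and `(ends e).2`. -/
def graphVal {V E : Type} [Fintype E] [DecidableEq V] (ends : E → V × V) (u : V) : ℕ :=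
  ∑ e : E, ((if (ends e).1 = u then 1 else 0) + (if (ends e).2 = u then 1 else 0))

/-- The p-energy ‖dx‖_p^p = Σ_e |x(e_+) - x(e_-)|^p of a function on the vertices. -/
noncomputable def graphEnergy {V E : Type} [Fintype E] (p : ℝ) (ends : E → V × V)
    (x : V → ℝ) : ℝ :=
  ∑ e : E, |x (ends e).2 - x (ends e).1| ^ p

/-- inf_{c ∈ ℝ} Σ_u |x_u - c|^p · val(u). -/
noncomputable def graphDenom {V E : Type} [Fintype V] [Fintype E] [DecidableEq V]
    (p : ℝ) (ends : E → V × V) (x : V → ℝ) : ℝ :=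
  sInf {t : ℝ | ∃ c : ℝ, t = ∑ u : V, |x u - c| ^ p * (graphVal ends u : ℝ)}

/-- λ_{1,p}: the first positive eigenvalue of the graph p-Laplacian, via the
Rayleigh quotient characterisation: infimum over non-constant `x` of
energy/denominator. -/
noncomputable def lambda1 {V E : Type} [Fintype V] [Fintype E] [DecidableEq V]
    (p : ℝ) (ends : E → V × V) : ℝ :=
  sInf {r : ℝ | ∃ x : V → ℝ, (∃ u v : V, x u ≠ x v) ∧
    r = graphEnergy p ends x / graphDenom p ends x}

/-- Adjacency relation of the multigraph. -/
def graphAdj {V E : Type} (ends : E → V × V) (u v : V) : Prop :=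
  ∃ e : E, ends e = (u, v) ∨ ends e = (v, u)

/-- Connectivity of the multigraph. -/
def graphConnected {V E : Type} (ends : E → V × V) : Prop :=
  ∀ u v : V, Relation.ReflTransGen (graphAdj ends) u v

lemma sum_rpow_weighted_le {V : Type} [Fintype V] (a : V → ℝ) (ha : ∀ u, 0 ≤ a u)
    (w : V → ℕ) {p p' : ℝ} (hp'0 : 0 < p') (hpp : p' ≤ p) :
    ∑ u : V, a u ^ p * (w u : ℝ) ≤ (∑ u : V, a u ^ p' * (w u : ℝ)) ^ (p / p') := by
  have hp0 : (0:ℝ) < p := lt_of_lt_of_le hp'0 hpp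
  set s := ∑ u : V, a u ^ p' * (w u : ℝ) with hs
  have hterm : ∀ u : V, 0 ≤ a u ^ p' * (w u : ℝ) := fun u =>
    mul_nonneg (Real.rpow_nonneg (ha u) _) (Nat.cast_nonneg _)
  have hs0 : 0 ≤ s := Finset.sum_nonneg fun u _ => hterm u
  have hr1 : (1:ℝ) ≤ p / p' := (one_le_div hp'0).2 hpp
  have hr0 : (0:ℝ) < p / p' := lt_of_lt_of_le one_pos hr1
  rcases eq_or_lt_of_le hs0 with h0 | hspos
  · have hz : ∀ u ∈ Finset.univ, a u ^ p' * (w u : ℝ) = 0 :=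
      (Finset.sum_eq_zero_iff_of_nonneg (fun u _ => hterm u)).1 h0.symm
    have hz' : ∀ u : V, a u ^ p * (w u : ℝ) = 0 := by
      intro u
      rcases mul_eq_zero.1 (hz u (Finset.mem_univ u)) with h | h
      · have hau : a u = 0 := by
          by_contra hne
          exact absurd h (ne_of_gt (Real.rpow_pos_of_pos
            (lt_of_le_of_ne (ha u) (Ne.symm hne)) p'))
        rw [hau, Real.zero_rpow (ne_of_gt hp0), zero_mul]
      · rw [h, mul_zero]
    rw [Finset.sum_eq_zero fun u _ => hz' u]
    exact Real.rpow_nonneg hs0 _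
  · have key : ∀ u : V, a u ^ p * (w u : ℝ) ≤ a u ^ p' * (w u : ℝ) * s ^ (p/p' - 1) := by
      intro u
      rcases Nat.eq_zero_or_pos (w u) with hw | hw
      · simp [hw]
      · have hw1 : (1 : ℝ) ≤ (w u : ℝ) := by exact_mod_cast hw
        rcases eq_or_lt_of_le (ha u) with h0' | hau
        · simp [← h0', Real.zero_rpow (ne_of_gt hp0), Real.zero_rpow (ne_of_gt hp'0)]
        · have h1 : a u ^ p' ≤ s := by
            calc a u ^ p' = a u ^ p' * 1 := (mul_one _).symm
            _ ≤ a u ^ p' * (w u : ℝ) :=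
                mul_le_mul_of_nonneg_left hw1 (le_of_lt (Real.rpow_pos_of_pos hau p'))
            _ ≤ s := Finset.single_le_sum (fun i _ => hterm i) (Finset.mem_univ u)
          have h2 : a u ^ p = a u ^ p' * (a u ^ p') ^ (p / p' - 1) := by
            have e1 : a u ^ p = (a u ^ p') ^ (p / p') := by
              rw [← Real.rpow_mul (ha u), mul_comm, div_mul_cancel₀ _ (ne_of_gt hp'0)]
            have h3 := Real.rpow_add (Real.rpow_pos_of_pos hau p') 1 (p/p'-1)
            rw [Real.rpow_one, show (1:ℝ) + (p/p'-1) = p/p' from by ring] at h3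
            rw [e1]; exact h3
          have hmono : (a u ^ p') ^ (p/p'-1) ≤ s ^ (p/p'-1) :=
            Real.rpow_le_rpow (le_of_lt (Real.rpow_pos_of_pos hau p')) h1 (by linarith)
          calc a u ^ p * (w u:ℝ) = a u ^ p' * (a u ^ p') ^ (p/p'-1) * (w u:ℝ) := by rw [← h2]
          _ ≤ a u ^ p' * s ^ (p/p'-1) * (w u:ℝ) := by gcongr
          _ = a u ^ p' * (w u:ℝ) * s ^ (p/p'-1) := by ring
    calc ∑ u : V, a u ^ p * (w u:ℝ) ≤ ∑ u : V, a u ^ p' * (w u:ℝ) * s ^ (p/p'-1) :=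
        Finset.sum_le_sum fun u _ => key u
    _ = s * s ^ (p/p'-1) := by rw [← Finset.sum_mul]
    _ = s ^ (p/p') := by
        have h3 := (Real.rpow_add hspos 1 (p/p'-1)).symm
        rw [Real.rpow_one, show (1:ℝ) + (p/p'-1) = p/p' from by ring] at h3
        exact h3

lemma sum_rpow_card {E : Type} [Fintype E] [Nonempty E] (b : E → ℝ) (hb : ∀ e, 0 ≤ b e)
    {r : ℝ} (hr : 1 ≤ r) :
    (∑ e : E, b e) ^ r ≤ (Fintype.card E : ℝ) ^ (r - 1) * ∑ e : E, b e ^ r := by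
  have hN : (0:ℝ) < (Fintype.card E : ℝ) := by exact_mod_cast Fintype.card_pos
  have h := Real.rpow_arith_mean_le_arith_mean_rpow Finset.univ
      (fun _ : E => (Fintype.card E : ℝ)⁻¹) b
      (fun i _ => by positivity)
      (by simp [Finset.sum_const, Finset.card_univ])
      (fun i _ => hb i) hr
  rw [← Finset.mul_sum, ← Finset.mul_sum,
    Real.mul_rpow (by positivity) (Finset.sum_nonneg fun e _ => hb e)] at h
  have key : (∑ e : E, b e) ^ r =
      (Fintype.card E:ℝ) ^ r * (((Fintype.card E:ℝ)⁻¹) ^ r * (∑ e : E, b e) ^ r) := by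
    rw [← mul_assoc, ← Real.mul_rpow hN.le (inv_nonneg.2 hN.le),
      mul_inv_cancel₀ (ne_of_gt hN), Real.one_rpow, one_mul]
  rw [key]
  calc (Fintype.card E:ℝ) ^ r * (((Fintype.card E:ℝ)⁻¹) ^ r * (∑ e : E, b e) ^ r)
      ≤ (Fintype.card E:ℝ) ^ r * ((Fintype.card E:ℝ)⁻¹ * ∑ e : E, b e ^ r) := by gcongr
  _ = (Fintype.card E : ℝ) ^ (r - 1) * ∑ e : E, b e ^ r := by
      rw [Real.rpow_sub hN, Real.rpow_one]; ring

/-- Right lower semicontinuity of λ_{1,p} in p: for a finite connected graph with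
E edges and 2 ≤ p' ≤ p, λ_{1,p}(G) ≥ E^{1-p/p'}·λ_{1,p'}(G)^{p/p'}. -/
theorem stmt4 {V E : Type} [Fintype V] [Fintype E] [DecidableEq V]
    (ends : E → V × V) (hconn : graphConnected ends)
    (p p' : ℝ) (hp' : 2 ≤ p') (hpp : p' ≤ p) :
    (Fintype.card E : ℝ) ^ (1 - p / p') * lambda1 p' ends ^ (p / p') ≤
      lambda1 p ends := by
  have hp'0 : (0:ℝ) < p' := lt_of_lt_of_le two_pos hp'
  have hp0 : (0:ℝ) < p := lt_of_lt_of_le hp'0 hpp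
  have hr1 : (1:ℝ) ≤ p / p' := (one_le_div hp'0).2 hpp
  have hr0 : (0:ℝ) < p / p' := lt_of_lt_of_le one_pos hr1
  by_cases hne : ∃ x : V → ℝ, ∃ u v : V, x u ≠ x v
  case neg =>
    have hemp : ∀ q : ℝ, lambda1 q ends = 0 := by
      intro q
      unfold lambda1
      convert Real.sInf_empty
      rw [Set.eq_empty_iff_forall_notMem]
      rintro t ⟨x, hx, -⟩
      exact hne ⟨x, hx⟩
    rw [hemp p, hemp p', Real.zero_rpow (ne_of_gt hr0), mul_zero]
  case pos =>
  obtain ⟨x₀, hx₀⟩ := hne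
  -- basic facts about the denominator sets
  have hDnonempty : ∀ (q : ℝ) (x : V → ℝ),
      {t : ℝ | ∃ c : ℝ, t = ∑ u : V, |x u - c| ^ q * (graphVal ends u : ℝ)}.Nonempty :=
    fun q x => ⟨_, 0, rfl⟩
  have hDbdd : ∀ (q : ℝ) (x : V → ℝ), ∀ t ∈
      {t : ℝ | ∃ c : ℝ, t = ∑ u : V, |x u - c| ^ q * (graphVal ends u : ℝ)}, (0:ℝ) ≤ t := by
    rintro q x t ⟨c, rfl⟩
    exact Finset.sum_nonneg fun u _ =>
      mul_nonneg (Real.rpow_nonneg (abs_nonneg _) q) (Nat.cast_nonneg _)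
  have hDnn : ∀ (q : ℝ) (x : V → ℝ), 0 ≤ graphDenom q ends x := fun q x =>
    Real.sInf_nonneg (hDbdd q x)
  have hDle : ∀ (q : ℝ) (x : V → ℝ) (c : ℝ),
      graphDenom q ends x ≤ ∑ u : V, |x u - c| ^ q * (graphVal ends u : ℝ) := fun q x c =>
    csInf_le ⟨0, hDbdd q x⟩ ⟨c, rfl⟩
  have hEnn : ∀ (q : ℝ) (x : V → ℝ), 0 ≤ graphEnergy q ends x := fun q x =>
    Finset.sum_nonneg fun e _ => Real.rpow_nonneg (abs_nonneg _) q
  -- valency bound from connectivity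
  have hval : ∀ w w' : V, w ≠ w' → 1 ≤ graphVal ends w := by
    intro w w' hne'
    rcases (hconn w w').cases_head with h | ⟨c, ⟨e, he⟩, -⟩
    · exact absurd h hne'
    · have h1 : 1 ≤ (if (ends e).1 = w then 1 else 0) + (if (ends e).2 = w then 1 else 0) := by
        rcases he with he | he <;> simp [he]
      exact le_trans h1 (Finset.single_le_sum
        (f := fun e : E => (if (ends e).1 = w then 1 else 0) + (if (ends e).2 = w then 1 else 0))
        (fun i _ => Nat.zero_le _) (Finset.mem_univ e))
  -- positivity of the denominator
  have hDpos : ∀ (q : ℝ), 0 < q → ∀ (x : V → ℝ), (∃ u v : V, x u ≠ x v) →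
      0 < graphDenom q ends x := by
    rintro q hq x ⟨u, v, huv⟩
    have huv' : u ≠ v := fun h => huv (by rw [h])
    set δ := |x u - x v| with hδdef
    have hδ : 0 < δ := abs_pos.2 (sub_ne_zero.2 huv)
    have hlow : ∀ c : ℝ, (δ/2)^q ≤ ∑ u' : V, |x u' - c| ^ q * (graphVal ends u' : ℝ) := by
      intro c
      have hcase : δ/2 ≤ |x u - c| ∨ δ/2 ≤ |x v - c| := by
        by_contra hcon
        push_neg at hcon
        have h3 : |x u - x v| ≤ |x u - c| + |x v - c| := by
          have h4 := abs_sub (x u - c) (x v - c)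
          simpa [sub_sub_sub_cancel_right] using h4
        rw [← hδdef] at h3
        linarith [hcon.1, hcon.2]
      have key : ∀ w w' : V, w ≠ w' → δ/2 ≤ |x w - c| →
          (δ/2)^q ≤ ∑ u' : V, |x u' - c| ^ q * (graphVal ends u' : ℝ) := by
        intro w w' hww' hc
        have hv1 : (1:ℝ) ≤ (graphVal ends w : ℝ) := by exact_mod_cast hval w w' hww'
        calc (δ/2)^q ≤ |x w - c|^q := Real.rpow_le_rpow (by positivity) hc (le_of_lt hq)
        _ = |x w - c|^q * 1 := (mul_one _).symm
        _ ≤ |x w - c|^q * (graphVal ends w : ℝ) :=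
            mul_le_mul_of_nonneg_left hv1 (Real.rpow_nonneg (abs_nonneg _) q)
        _ ≤ ∑ u' : V, |x u' - c| ^ q * (graphVal ends u' : ℝ) :=
            Finset.single_le_sum
              (f := fun u' : V => |x u' - c| ^ q * (graphVal ends u' : ℝ))
              (fun i _ =>
                mul_nonneg (Real.rpow_nonneg (abs_nonneg _) q) (Nat.cast_nonneg _))
              (Finset.mem_univ w)
      rcases hcase with hc | hc
      · exact key u v huv' hc
      · exact key v u (Ne.symm huv') hc
    have : (δ/2)^q ≤ graphDenom q ends x := by
      apply le_csInf (hDnonempty q x)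
      rintro t ⟨c, rfl⟩
      exact hlow c
    exact lt_of_lt_of_le (Real.rpow_pos_of_pos (by positivity) q) this
  -- reduce to a bound for each nonconstant x
  refine le_csInf ⟨_, ⟨x₀, hx₀, rfl⟩⟩ ?_
  rintro t ⟨x, hx, rfl⟩
  obtain ⟨u, v, huv⟩ := hx
  have hEne : Nonempty E := by
    rcases (hconn u v).cases_head with h | ⟨c, ⟨e, -⟩, -⟩
    · exact absurd (congrArg x h) huv
    · exact ⟨e⟩
  have hN : (0:ℝ) < (Fintype.card E : ℝ) := by exact_mod_cast Fintype.card_pos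
  have hdp'pos : 0 < graphDenom p' ends x := hDpos p' hp'0 x ⟨u, v, huv⟩
  have hdppos : 0 < graphDenom p ends x := hDpos p hp0 x ⟨u, v, huv⟩
  -- denominator comparison
  have hA : graphDenom p ends x ≤ graphDenom p' ends x ^ (p / p') := by
    have h1 : graphDenom p ends x ^ (p'/p) ≤ graphDenom p' ends x := by
      apply le_csInf (hDnonempty p' x)
      rintro t ⟨c, rfl⟩
      have ht0 : (0:ℝ) ≤ ∑ u' : V, |x u' - c| ^ p' * (graphVal ends u' : ℝ) :=
        hDbdd p' x _ ⟨c, rfl⟩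
      have h2 : graphDenom p ends x ≤
          (∑ u' : V, |x u' - c| ^ p' * (graphVal ends u' : ℝ)) ^ (p / p') := by
        calc graphDenom p ends x ≤ ∑ u' : V, |x u' - c| ^ p * (graphVal ends u' : ℝ) :=
            hDle p x c
        _ ≤ _ := sum_rpow_weighted_le (fun u' => |x u' - c|) (fun _ => abs_nonneg _)
            (fun u' => graphVal ends u') hp'0 hpp
      calc graphDenom p ends x ^ (p'/p)
          ≤ ((∑ u' : V, |x u' - c| ^ p' * (graphVal ends u' : ℝ)) ^ (p/p')) ^ (p'/p) :=
            Real.rpow_le_rpow (hDnn p x) h2 (by positivity)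
      _ = ∑ u' : V, |x u' - c| ^ p' * (graphVal ends u' : ℝ) := by
          rw [← Real.rpow_mul ht0,
            show (p/p') * (p'/p) = 1 from by
              rw [div_mul_div_comm, mul_comm p p', div_self (by positivity : p' * p ≠ 0)],
            Real.rpow_one]
    calc graphDenom p ends x = (graphDenom p ends x ^ (p'/p)) ^ (p/p') := by
              rw [← Real.rpow_mul (hDnn p x),
                show (p'/p) * (p/p') = 1 from by
                  rw [div_mul_div_comm, mul_comm p' p,
                    div_self (by positivity : p * p' ≠ 0)],
                Real.rpow_one]
    _ ≤ graphDenom p' ends x ^ (p/p') :=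
        Real.rpow_le_rpow (Real.rpow_nonneg (hDnn p x) _) h1 (le_of_lt hr0)
  -- energy comparison
  have hB : graphEnergy p' ends x ^ (p/p') ≤
      (Fintype.card E : ℝ) ^ (p/p' - 1) * graphEnergy p ends x := by
    have h := sum_rpow_card (fun e : E => |x (ends e).2 - x (ends e).1| ^ p')
      (fun e => Real.rpow_nonneg (abs_nonneg _) _) hr1
    have h2 : ∀ e : E, (|x (ends e).2 - x (ends e).1| ^ p') ^ (p/p') =
        |x (ends e).2 - x (ends e).1| ^ p := by
      intro e
      rw [← Real.rpow_mul (abs_nonneg _), mul_comm, div_mul_cancel₀ _ (ne_of_gt hp'0)]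
    simp only [h2] at h
    exact h
  -- lambda1 p' bounds
  have hlb : ∀ t ∈ {r : ℝ | ∃ x : V → ℝ, (∃ u v : V, x u ≠ x v) ∧
      r = graphEnergy p' ends x / graphDenom p' ends x}, (0:ℝ) ≤ t := by
    rintro t ⟨y, -, rfl⟩
    exact div_nonneg (hEnn p' y) (hDnn p' y)
  have hlnn : 0 ≤ lambda1 p' ends := Real.sInf_nonneg hlb
  have hlle : lambda1 p' ends ≤ graphEnergy p' ends x / graphDenom p' ends x :=
    csInf_le ⟨0, hlb⟩ ⟨x, ⟨u, v, huv⟩, rfl⟩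
  have hNN : (Fintype.card E:ℝ)^(1-p/p') * (Fintype.card E:ℝ)^(p/p'-1) = 1 := by
    rw [← Real.rpow_add hN]; norm_num
  calc (Fintype.card E:ℝ)^(1-p/p') * lambda1 p' ends ^ (p/p')
      ≤ (Fintype.card E:ℝ)^(1-p/p') *
        (graphEnergy p' ends x / graphDenom p' ends x) ^ (p/p') := by
        gcongr
  _ = (Fintype.card E:ℝ)^(1-p/p') *
        (graphEnergy p' ends x ^ (p/p') / graphDenom p' ends x ^ (p/p')) := by
      rw [Real.div_rpow (hEnn p' x) (le_of_lt hdp'pos)]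
  _ ≤ (Fintype.card E:ℝ)^(1-p/p') *
        (((Fintype.card E:ℝ)^(p/p'-1) * graphEnergy p ends x) /
          graphDenom p' ends x ^ (p/p')) := by
      gcongr
  _ = graphEnergy p ends x / graphDenom p' ends x ^ (p/p') := by
      rw [mul_div_assoc', ← mul_assoc, hNN, one_mul]
  _ ≤ graphEnergy p ends x / graphDenom p ends x := by
      gcongr
      exact hEnn p x
end

section
/- Suppose a finite graph L is the edge-disjoint union of three graphs L^1, L^2, L^3 on the same vertex set, and each L^i has all vertex degrees in the interval [(1-ι)d, (1+ι)d] for some d > 0 and ι ∈ (0,1). Then λ_{1,p}(L) ≥ ((1-ι)/(1+ι))·(1/3)·(λ_{1,p}(L^1) + λ_{1,p}(L^2) + λ_{1,p}(L^3)). -/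
/-!
For a non-constant `x`, the degree bounds give `K · val_L ≤ val_{Lⁱ}` pointwise with
`K = (1-ι)/(3(1+ι))`, hence `K · D_L(x) ≤ D_{Lⁱ}(x)` for the weighted denominators and so
`K · λ(Lⁱ) · D_L(x) ≤ E_{Lⁱ}(x)`. Summing over `i` and using `E_L = Σᵢ E_{Lⁱ}` bounds the
Rayleigh quotient of `x` on `L` from below by `K · Σᵢ λ(Lⁱ)`. Every vertex of `L` has positive
degree, so `D_L(x) > 0` and the quotient is not a junk value of division by zero.
-/

open Finset

lemma half_abs_sub_rpow_le {p : ℝ} (hp : 0 ≤ p) (a b c : ℝ) :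
    (|a - b| / 2) ^ p ≤ |a - c| ^ p + |b - c| ^ p := by
  have hab : |a - b| ≤ |a - c| + |b - c| := abs_sub_comm c b ▸ abs_sub_le a c b
  have h0 : 0 ≤ |a - b| / 2 := by positivity
  rcases le_total |a - c| |b - c| with h | h
  · exact (Real.rpow_le_rpow h0 (by linarith) hp).trans
      (le_add_of_nonneg_left (Real.rpow_nonneg (abs_nonneg _) _))
  · exact (Real.rpow_le_rpow h0 (by linarith) hp).trans
      (le_add_of_nonneg_right (Real.rpow_nonneg (abs_nonneg _) _))

section RayleighQuotient

variable {V E : Type} [Fintype E]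

lemma graphEnergy_sumElim {E' : Type} [Fintype E'] (p : ℝ) (ends : E → V × V)
    (ends' : E' → V × V) (x : V → ℝ) :
    graphEnergy p (Sum.elim ends ends') x = graphEnergy p ends x + graphEnergy p ends' x := by
  simp only [graphEnergy, Fintype.sum_sum_type, Sum.elim_inl, Sum.elim_inr]

lemma graphEnergy_nonneg (p : ℝ) (ends : E → V × V) (x : V → ℝ) :
    0 ≤ graphEnergy p ends x :=
  sum_nonneg fun _ _ => Real.rpow_nonneg (abs_nonneg _) _

variable [DecidableEq V]

lemma graphVal_sumElim {E' : Type} [Fintype E'] (ends : E → V × V) (ends' : E' → V × V)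
    (u : V) : graphVal (Sum.elim ends ends') u = graphVal ends u + graphVal ends' u := by
  simp only [graphVal, Fintype.sum_sum_type, Sum.elim_inl, Sum.elim_inr]
  rfl

variable [Fintype V]

lemma graphDenom_sum_nonneg (p : ℝ) (ends : E → V × V) (x : V → ℝ) (c : ℝ) :
    0 ≤ ∑ u : V, |x u - c| ^ p * (graphVal ends u : ℝ) :=
  sum_nonneg fun _ _ => mul_nonneg (Real.rpow_nonneg (abs_nonneg _) _) (Nat.cast_nonneg _)

lemma graphDenom_le (p : ℝ) (ends : E → V × V) (x : V → ℝ) (c : ℝ) :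
    graphDenom p ends x ≤ ∑ u : V, |x u - c| ^ p * (graphVal ends u : ℝ) :=
  csInf_le ⟨0, by rintro t ⟨c, rfl⟩; exact graphDenom_sum_nonneg p ends x c⟩ ⟨c, rfl⟩

lemma graphDenom_nonneg (p : ℝ) (ends : E → V × V) (x : V → ℝ) :
    0 ≤ graphDenom p ends x :=
  Real.sInf_nonneg <| by rintro t ⟨c, rfl⟩; exact graphDenom_sum_nonneg p ends x c

lemma le_graphDenom {p t : ℝ} {ends : E → V × V} {x : V → ℝ}
    (h : ∀ c : ℝ, t ≤ ∑ u : V, |x u - c| ^ p * (graphVal ends u : ℝ)) :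
    t ≤ graphDenom p ends x :=
  le_csInf ⟨_, 0, rfl⟩ <| by rintro s ⟨c, rfl⟩; exact h c

lemma mul_graphDenom_le_graphDenom {E' : Type} [Fintype E'] {p K : ℝ} (hK : 0 ≤ K)
    {ends : E → V × V} {ends' : E' → V × V}
    (h : ∀ u : V, K * (graphVal ends u : ℝ) ≤ graphVal ends' u) (x : V → ℝ) :
    K * graphDenom p ends x ≤ graphDenom p ends' x :=
  le_graphDenom fun c => calc
    K * graphDenom p ends x ≤ K * ∑ u : V, |x u - c| ^ p * (graphVal ends u : ℝ) :=
      mul_le_mul_of_nonneg_left (graphDenom_le p ends x c) hK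
    _ = ∑ u : V, |x u - c| ^ p * (K * graphVal ends u) := by
      rw [mul_sum]; exact sum_congr rfl fun _ _ => by ring
    _ ≤ ∑ u : V, |x u - c| ^ p * (graphVal ends' u : ℝ) :=
      sum_le_sum fun u _ => mul_le_mul_of_nonneg_left (h u) (Real.rpow_nonneg (abs_nonneg _) _)

lemma graphDenom_pos {p : ℝ} (hp : 0 ≤ p) {ends : E → V × V}
    (hval : ∀ u : V, 0 < graphVal ends u) {x : V → ℝ} {a b : V} (hab : x a ≠ x b) :
    0 < graphDenom p ends x := by
  have hab' : a ≠ b := fun h => hab (congrArg x h)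
  have hpos : 0 < (|x a - x b| / 2) ^ p := by
    apply Real.rpow_pos_of_pos; simpa [sub_eq_zero] using hab
  refine hpos.trans_le (le_graphDenom fun c => ?_)
  have hweight : ∀ u, |x u - c| ^ p ≤ |x u - c| ^ p * (graphVal ends u : ℝ) := fun u =>
    le_mul_of_one_le_right (Real.rpow_nonneg (abs_nonneg _) _) (by exact_mod_cast hval u)
  calc (|x a - x b| / 2) ^ p ≤ |x a - c| ^ p + |x b - c| ^ p := half_abs_sub_rpow_le hp _ _ _
    _ ≤ ∑ u ∈ {a, b}, |x u - c| ^ p * (graphVal ends u : ℝ) := by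
      rw [sum_pair hab']; exact add_le_add (hweight a) (hweight b)
    _ ≤ ∑ u : V, |x u - c| ^ p * (graphVal ends u : ℝ) :=
      sum_le_sum_of_subset_of_nonneg (subset_univ _) fun u _ _ =>
        mul_nonneg (Real.rpow_nonneg (abs_nonneg _) _) (Nat.cast_nonneg _)

lemma lambda1_of_subsingleton [Subsingleton V] (p : ℝ) (ends : E → V × V) :
    lambda1 p ends = 0 := by
  have hempty : {r : ℝ | ∃ x : V → ℝ, (∃ u v : V, x u ≠ x v) ∧
      r = graphEnergy p ends x / graphDenom p ends x} = ∅ :=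
    Set.eq_empty_of_forall_notMem fun _ ⟨x, ⟨u, v, huv⟩, _⟩ =>
      huv (congrArg x (Subsingleton.elim u v))
  rw [lambda1, hempty, Real.sInf_empty]

lemma lambda1_nonneg (p : ℝ) (ends : E → V × V) : 0 ≤ lambda1 p ends :=
  Real.sInf_nonneg <| by
    rintro r ⟨x, _, rfl⟩
    exact div_nonneg (graphEnergy_nonneg p ends x) (graphDenom_nonneg p ends x)

lemma lambda1_mul_graphDenom_le (p : ℝ) (ends : E → V × V) {x : V → ℝ}
    (hx : ∃ u v : V, x u ≠ x v) :
    lambda1 p ends * graphDenom p ends x ≤ graphEnergy p ends x := by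
  have hle : lambda1 p ends ≤ graphEnergy p ends x / graphDenom p ends x :=
    csInf_le ⟨0, by
      rintro r ⟨y, _, rfl⟩
      exact div_nonneg (graphEnergy_nonneg p ends y) (graphDenom_nonneg p ends y)⟩ ⟨x, hx, rfl⟩
  rcases (graphDenom_nonneg p ends x).eq_or_lt with hD | hD
  · rw [← hD, mul_zero]; exact graphEnergy_nonneg p ends x
  · exact (le_div_iff₀ hD).mp hle

lemma le_lambda1 [Nontrivial V] {p c : ℝ} (hp : 0 ≤ p) {ends : E → V × V}
    (hval : ∀ u : V, 0 < graphVal ends u)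
    (h : ∀ x : V → ℝ, (∃ u v : V, x u ≠ x v) → c * graphDenom p ends x ≤ graphEnergy p ends x) :
    c ≤ lambda1 p ends := by
  obtain ⟨a, b, hab⟩ := exists_pair_ne V
  refine le_csInf ⟨_, fun w => if w = a then 1 else 0, ⟨a, b, by simp [hab.symm]⟩, rfl⟩ ?_
  rintro r ⟨x, ⟨u, v, huv⟩, rfl⟩
  exact (le_div_iff₀ (graphDenom_pos hp hval huv)).mpr (h x ⟨u, v, huv⟩)

lemma mul_lambda1_mul_graphDenom_le {E' : Type} [Fintype E'] {p K : ℝ} (hK : 0 ≤ K)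
    {ends : E → V × V} {ends' : E' → V × V}
    (h : ∀ u : V, K * (graphVal ends u : ℝ) ≤ graphVal ends' u) {x : V → ℝ}
    (hx : ∃ u v : V, x u ≠ x v) :
    K * lambda1 p ends' * graphDenom p ends x ≤ graphEnergy p ends' x :=
  calc K * lambda1 p ends' * graphDenom p ends x
      = lambda1 p ends' * (K * graphDenom p ends x) := by ring
    _ ≤ lambda1 p ends' * graphDenom p ends' x :=
      mul_le_mul_of_nonneg_left (mul_graphDenom_le_graphDenom hK h x) (lambda1_nonneg p ends')
    _ ≤ graphEnergy p ends' x := lambda1_mul_graphDenom_le p ends' hx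

end RayleighQuotient

/-- If L = L¹ ∪ L² ∪ L³ is an edge-disjoint union of three graphs on the same
vertex set, each with all degrees in [(1-ι)d, (1+ι)d], then
λ_{1,p}(L) ≥ ((1-ι)/(1+ι))·(1/3)·(λ_{1,p}(L¹) + λ_{1,p}(L²) + λ_{1,p}(L³)). -/
theorem stmt9 {V E₁ E₂ E₃ : Type} [Fintype V] [Fintype E₁] [Fintype E₂] [Fintype E₃]
    [DecidableEq V]
    (ends₁ : E₁ → V × V) (ends₂ : E₂ → V × V) (ends₃ : E₃ → V × V)
    (p : ℝ) (hp : 1 < p) (d : ℝ) (hd : 0 < d) (ι : ℝ) (hι0 : 0 < ι) (hι1 : ι < 1)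
    (hdeg₁ : ∀ u : V, (1 - ι) * d ≤ (graphVal ends₁ u : ℝ) ∧ (graphVal ends₁ u : ℝ) ≤ (1 + ι) * d)
    (hdeg₂ : ∀ u : V, (1 - ι) * d ≤ (graphVal ends₂ u : ℝ) ∧ (graphVal ends₂ u : ℝ) ≤ (1 + ι) * d)
    (hdeg₃ : ∀ u : V, (1 - ι) * d ≤ (graphVal ends₃ u : ℝ) ∧ (graphVal ends₃ u : ℝ) ≤ (1 + ι) * d) :
    lambda1 p (Sum.elim ends₁ (Sum.elim ends₂ ends₃) : E₁ ⊕ (E₂ ⊕ E₃) → V × V) ≥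
      (1 - ι) / (1 + ι) * (1 / 3) *
        (lambda1 p ends₁ + lambda1 p ends₂ + lambda1 p ends₃) := by
  set ends := Sum.elim ends₁ (Sum.elim ends₂ ends₃)
  set K := (1 - ι) / (1 + ι) * (1 / 3)
  have hK : 0 ≤ K := mul_nonneg (div_nonneg (by linarith) (by linarith)) (by norm_num)
  have hval : ∀ u, (graphVal ends u : ℝ) = graphVal ends₁ u + graphVal ends₂ u + graphVal ends₃ u :=
    fun u => by simp only [ends, graphVal_sumElim, Nat.cast_add, add_assoc]
  have hcompare : ∀ u, K * graphVal ends u ≤ (1 - ι) * d := fun u => calc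
    K * graphVal ends u ≤ K * (3 * ((1 + ι) * d)) := by
      rw [hval]; gcongr; linarith [(hdeg₁ u).2, (hdeg₂ u).2, (hdeg₃ u).2]
    _ = (1 - ι) * d := by simp only [K]; field_simp
  have hval_pos : ∀ u, 0 < graphVal ends u := fun u => by
    rw [← Nat.cast_pos (α := ℝ), hval]
    linarith [mul_pos (sub_pos.2 hι1) hd, (hdeg₁ u).1, (hdeg₂ u).1, (hdeg₃ u).1]
  rcases subsingleton_or_nontrivial V with _ | _
  · simp [lambda1_of_subsingleton]
  refine le_lambda1 (by linarith) hval_pos fun x hx => ?_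
  calc K * (lambda1 p ends₁ + lambda1 p ends₂ + lambda1 p ends₃) * graphDenom p ends x
      = K * lambda1 p ends₁ * graphDenom p ends x + K * lambda1 p ends₂ * graphDenom p ends x
        + K * lambda1 p ends₃ * graphDenom p ends x := by ring
    _ ≤ graphEnergy p ends₁ x + graphEnergy p ends₂ x + graphEnergy p ends₃ x := by
      gcongr
      exacts [mul_lambda1_mul_graphDenom_le hK (fun u => (hcompare u).trans (hdeg₁ u).1) hx,
        mul_lambda1_mul_graphDenom_le hK (fun u => (hcompare u).trans (hdeg₂ u).1) hx,
        mul_lambda1_mul_graphDenom_le hK (fun u => (hcompare u).trans (hdeg₃ u).1) hx]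
    _ = graphEnergy p ends x := by simp only [ends, graphEnergy_sumElim, add_assoc]
end

section
/- Let V = {1,…,m}, p ≥ 2, and let d_1,…,d_m be positive integers with maximum d and minimum at least d/θ for some θ ≥ 1. Suppose x ∈ ℝ^m satisfies Σ_i |x_i|^p d_i ≤ A for some A ≥ 1. Then for any γ > 0, the sum of max(|x_i|^{p-1}|x_j|, |x_i||x_j|^{p-1}) over all ordered pairs (i,j) ∈ V×V with max(|x_i|^{p-1}|x_j|, |x_i||x_j|^{p-1}) ≥ γ/(dm) is at most 2m·θ²·A²/(γ^{1/p}·d). -/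
/-!
Write `M_ij = max(|x_i|^{p-1}|x_j|, |x_i||x_j|^{p-1})`, `K = γ/(dm)` and `T = Σ_i |x_i|^p`.
A heavy pair has `M_ij ≤ M_ij^{1+1/p} / K^{1/p}`. With `s = 1 + 1/p` and `r = (p-1)s`,
`M_ij^s ≤ |x_i|^r |x_j|^s + |x_i|^s |x_j|^r`, so the sum over all pairs factorises, and the
power-mean inequality `Σ_i |x_i|^e ≤ m^{1-e/p} T^{e/p}` (for `e ≤ p`) bounds it by
`2 m^{1-1/p} T^{1+1/p}`, where `r + s = ps` makes the exponents add up. Finally `dT ≤ θA`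
because every weight `d_i` is at least `d/θ`, and `(θA)^{1+1/p} ≤ (θA)^2` as `θA ≥ 1`.
-/

open Finset Real

theorem sum_rpow_le_card_rpow_mul_sum_rpow {ι : Type*} (s : Finset ι) {a : ι → ℝ}
    (ha : ∀ i, 0 ≤ a i) {e p : ℝ} (he : 0 < e) (hep : e ≤ p) :
    ∑ i ∈ s, a i ^ e ≤ (#s : ℝ) ^ (1 - e / p) * (∑ i ∈ s, a i ^ p) ^ (e / p) := by
  have h := inner_le_weight_mul_Lp_of_nonneg s (p := p / e) (by rwa [le_div_iff₀ he, one_mul])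
    (fun _ => 1) (fun i => a i ^ e) (fun _ => zero_le_one) (fun i => rpow_nonneg (ha i) e)
  simpa [inv_div, ← rpow_mul (ha _), mul_div_cancel₀ _ he.ne'] using h

theorem sum_filter_le_le_sum_rpow_div {ι : Type*} (s : Finset ι) {M : ι → ℝ} {K t : ℝ}
    (hK : 0 < K) (ht : 0 ≤ t) (hM : ∀ i, 0 ≤ M i) :
    ∑ i ∈ s with K ≤ M i, M i ≤ (∑ i ∈ s, M i ^ (1 + t)) / K ^ t := by
  calc ∑ i ∈ s with K ≤ M i, M i ≤ ∑ i ∈ s with K ≤ M i, M i ^ (1 + t) / K ^ t := by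
        refine sum_le_sum fun i hi => ?_
        have hKM := (mem_filter.1 hi).2
        rw [le_div_iff₀ (by positivity), rpow_add (hK.trans_le hKM), rpow_one]
        exact mul_le_mul_of_nonneg_left (rpow_le_rpow hK.le hKM ht) (hM i)
    _ ≤ ∑ i ∈ s, M i ^ (1 + t) / K ^ t :=
        sum_le_sum_of_subset_of_nonneg (filter_subset _ _) fun i _ _ => by
          have := hM i; positivity
    _ = (∑ i ∈ s, M i ^ (1 + t)) / K ^ t := (sum_div _ _ _).symm

theorem sum_max_rpow_pairs_le {ι : Type*} [Fintype ι] {a : ι → ℝ} (ha : ∀ i, 0 ≤ a i) {p : ℝ}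
    (hp : 2 ≤ p) :
    ∑ ij : ι × ι, max (a ij.1 ^ (p - 1) * a ij.2) (a ij.1 * a ij.2 ^ (p - 1)) ^ (1 + 1 / p) ≤
      2 * (Fintype.card ι : ℝ) ^ (1 - 1 / p) * (∑ i, a i ^ p) ^ (1 + 1 / p) := by
  set s : ℝ := 1 + 1 / p
  set r : ℝ := (p - 1) * s
  have hp0 : 0 < p := by linarith
  have hs : 0 < s := by positivity
  have hr : 0 < r := mul_pos (by linarith) hs
  have hrs : r + s = p * s := by ring
  have hterm : ∀ i j, max (a i ^ (p - 1) * a j) (a i * a j ^ (p - 1)) ^ s ≤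
      a i ^ r * a j ^ s + a i ^ s * a j ^ r := by
    intro i j
    have hai := ha i
    have haj := ha j
    have hu : 0 ≤ a i ^ (p - 1) * a j := by positivity
    have hv : 0 ≤ a i * a j ^ (p - 1) := by positivity
    rw [(monotoneOn_rpow_Ici_of_exponent_nonneg hs.le).map_max (Set.mem_Ici.2 hu)
      (Set.mem_Ici.2 hv), mul_rpow (by positivity) haj, mul_rpow hai (by positivity),
      ← rpow_mul hai, ← rpow_mul haj]
    exact max_le_add_of_nonneg (by positivity) (by positivity)
  have hr_le : r ≤ p := by
    have : r = p - 1 / p := by simp only [r, s]; field_simp; ring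
    have : 0 < 1 / p := by positivity
    linarith
  have hs_le : s ≤ p := by
    have : 1 / p ≤ 1 / 2 := one_div_le_one_div_of_le two_pos hp
    simp only [s]; linarith
  have hT : 0 ≤ ∑ i, a i ^ p := sum_nonneg fun i _ => rpow_nonneg (ha i) p
  have hn : (0 : ℝ) ≤ Fintype.card ι := Nat.cast_nonneg _
  calc ∑ ij : ι × ι, max (a ij.1 ^ (p - 1) * a ij.2) (a ij.1 * a ij.2 ^ (p - 1)) ^ s
      ≤ ∑ ij : ι × ι, (a ij.1 ^ r * a ij.2 ^ s + a ij.1 ^ s * a ij.2 ^ r) :=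
        sum_le_sum fun ij _ => hterm ij.1 ij.2
    _ = 2 * ((∑ i, a i ^ r) * ∑ i, a i ^ s) := by
        rw [Fintype.sum_prod_type, sum_mul_sum]
        simp only [sum_add_distrib, two_mul, add_right_inj]
        rw [sum_comm]
        simp only [mul_comm]
    _ ≤ 2 * (((Fintype.card ι : ℝ) ^ (1 - r / p) * (∑ i, a i ^ p) ^ (r / p)) *
          ((Fintype.card ι : ℝ) ^ (1 - s / p) * (∑ i, a i ^ p) ^ (s / p))) := by
        gcongr
        · exact sum_nonneg fun i _ => rpow_nonneg (ha i) s
        · exact sum_rpow_le_card_rpow_mul_sum_rpow _ ha hr hr_le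
        · exact sum_rpow_le_card_rpow_mul_sum_rpow _ ha hs hs_le
    _ = 2 * (Fintype.card ι : ℝ) ^ (1 - 1 / p) * (∑ i, a i ^ p) ^ s := by
        have hexp : r / p + s / p = s := by rw [← add_div, hrs, mul_div_cancel_left₀ _ hp0.ne']
        have h1p : 1 / p < 1 := by rw [div_lt_one hp0]; linarith
        rw [mul_mul_mul_comm, ← rpow_add' hn (by linarith), ← rpow_add' hT (by linarith)]
        rw [hexp, show 1 - r / p + (1 - s / p) = 1 - 1 / p by simp only [s] at hexp ⊢; linarith,
          mul_assoc]

theorem sum_filter_max_rpow_pairs_le {ι : Type*} [Fintype ι] {a : ι → ℝ} (ha : ∀ i, 0 ≤ a i)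
    {p K : ℝ} (hp : 2 ≤ p) (hK : 0 < K) :
    ∑ ij ∈ (univ : Finset (ι × ι)) with
        K ≤ max (a ij.1 ^ (p - 1) * a ij.2) (a ij.1 * a ij.2 ^ (p - 1)),
      max (a ij.1 ^ (p - 1) * a ij.2) (a ij.1 * a ij.2 ^ (p - 1)) ≤
      2 * (Fintype.card ι : ℝ) ^ (1 - 1 / p) * (∑ i, a i ^ p) ^ (1 + 1 / p) / K ^ (1 / p) := by
  have hp0 : 0 < p := by linarith
  calc _ ≤ _ := sum_filter_le_le_sum_rpow_div _ hK (by positivity) fun ij => by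
        have := ha ij.1; have := ha ij.2; positivity
    _ ≤ _ := div_le_div_of_nonneg_right (sum_max_rpow_pairs_le ha hp) (by positivity)

theorem stmt11_general (m : ℕ) (p θ A γ : ℝ) (hp : 2 ≤ p) (hθ : 1 ≤ θ) (hA : 1 ≤ A)
    (hγ : 0 < γ) (dvec : Fin m → ℕ) (d : ℕ)
    (hdpos : ∀ i, 0 < dvec i) (hdmax : ∀ i, dvec i ≤ d)
    (hdmin : ∀ i, (d : ℝ) ≤ θ * (dvec i : ℝ))
    (x : Fin m → ℝ) (hx : ∑ i, |x i| ^ p * (dvec i : ℝ) ≤ A) :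
    ∑ ij ∈ Finset.univ.filter (fun ij : Fin m × Fin m =>
        γ / ((d : ℝ) * m) ≤ max (|x ij.1| ^ (p - 1) * |x ij.2|) (|x ij.1| * |x ij.2| ^ (p - 1))),
      max (|x ij.1| ^ (p - 1) * |x ij.2|) (|x ij.1| * |x ij.2| ^ (p - 1)) ≤
      2 * m * θ ^ 2 * A ^ 2 / (γ ^ (1 / p) * d) := by
  obtain rfl | hm := m.eq_zero_or_pos
  · simp
  have hm' : (0 : ℝ) < m := Nat.cast_pos.2 hm
  have hd : (0 : ℝ) < d := Nat.cast_pos.2 ((hdpos ⟨0, hm⟩).trans_le (hdmax _))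
  have hpairs := sum_filter_max_rpow_pairs_le (fun i => abs_nonneg (x i)) hp
    (by positivity : 0 < γ / (d * m))
  rw [Fintype.card_fin] at hpairs
  set T := ∑ i, |x i| ^ p
  have hT : 0 ≤ T := sum_nonneg fun i _ => rpow_nonneg (abs_nonneg (x i)) p
  have hdT : d * T ≤ θ * A := calc
    d * T ≤ θ * ∑ i, |x i| ^ p * dvec i := by
      rw [mul_sum, mul_sum]
      exact sum_le_sum fun i _ => by nlinarith [hdmin i, rpow_nonneg (abs_nonneg (x i)) p]
    _ ≤ θ * A := by gcongr
  have hexp : 1 + 1 / p ≤ 2 := by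
    have : 1 / p ≤ 1 := by rw [div_le_one (by linarith)]; linarith
    linarith
  calc _ ≤ _ := hpairs
    _ = 2 * m * (d * T) ^ (1 + 1 / p) / (γ ^ (1 / p) * d) := by
        rw [div_rpow hγ.le (by positivity), mul_rpow hd.le hm'.le, mul_rpow hd.le hT,
          rpow_add hd, rpow_sub hm', rpow_one, rpow_one]
        field_simp
    _ ≤ 2 * m * (θ * A) ^ (2 : ℝ) / (γ ^ (1 / p) * d) := by
        gcongr
        exact (rpow_le_rpow (by positivity) hdT (by positivity)).trans
          (rpow_le_rpow_of_exponent_le (by nlinarith) hexp)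
    _ = 2 * m * θ ^ 2 * A ^ 2 / (γ ^ (1 / p) * d) := by
        rw [rpow_two]; ring

/-- Lemma on heavy pairs: if Σ_i |x_i|^p d_i ≤ A, then the sum of
ovRe_p(x_i,x_j) = max(|x_i|^{p-1}|x_j|, |x_i||x_j|^{p-1}) over ordered pairs
with ovRe_p(x_i,x_j) ≥ γ/(dm) is at most 2m·θ²·A²/(γ^{1/p}·d). -/
theorem stmt11 (m : ℕ) (p θ A γ : ℝ) (hp : 2 ≤ p) (hθ : 1 ≤ θ) (hA : 1 ≤ A)
    (hγ : 0 < γ) (dvec : Fin m → ℕ) (d : ℕ)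
    (hdpos : ∀ i, 0 < dvec i) (hdmax : ∀ i, dvec i ≤ d) (hdtop : ∃ i, dvec i = d)
    (hdmin : ∀ i, (d : ℝ) ≤ θ * (dvec i : ℝ))
    (x : Fin m → ℝ) (hx : ∑ i, |x i| ^ p * (dvec i : ℝ) ≤ A) :
    ∑ ij ∈ Finset.univ.filter (fun ij : Fin m × Fin m =>
        γ / ((d : ℝ) * m) ≤ max (|x ij.1| ^ (p - 1) * |x ij.2|) (|x ij.1| * |x ij.2| ^ (p - 1))),
      max (|x ij.1| ^ (p - 1) * |x ij.2|) (|x ij.1| * |x ij.2| ^ (p - 1)) ≤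
      2 * m * θ ^ 2 * A ^ 2 / (γ ^ (1 / p) * d) :=
  stmt11_general m p θ A γ hp hθ hA hγ dvec d hdpos hdmax hdmin x hx
end

section
/- Let p ≥ 2, q = p/(p-1), θ ≥ 1, ε > 0 with εθ ≤ 1, R ≥ 1, and let d_1,…,d_m be positive integers with d = max_i d_i and d_i ≥ d/θ for all i. Then the set T of points x ∈ ℝ^m such that for each i, sign(x_i)|x_i|^{p-1} ∈ (ε d^{1/p}/(d_i m^{1/q}))·ℤ, Σ_i sign(x_i)|x_i|^{p-1} d_i = 0, and Σ_i |x_i|^p d_i ≤ R, is finite of cardinality at most (4eR/ε)^m, provided m is large enough that the ℓ^q-ball volume bound V_q(1) ≤ (2e/m^{1/q})^m holds. -/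
open Finset MeasureTheory

/-!
Write `sign (x i) * |x i| ^ (p - 1) = c i * z i` with `z : Fin m → ℤ`. Since `t ↦ sign t * |t| ^ r`
is invertible, `x` is determined by `z`, and since `(p - 1) * q = p` the constraint
`∑ |x i| ^ p * d i ≤ R` becomes `∑ |a i * z i| ^ q ≤ R` with `a i = c i * d i ^ (1 / q)`.
The unit cubes `z + [0, 1)^m` over these lattice points are disjoint and, by Minkowski's
inequality and `∑ a i ^ q ≤ 1`, lie in the weighted ball `∑ |a i * w i| ^ q ≤ (2 R ^ (1 / q)) ^ q`,
a diagonal linear image of the unit `ℓ^q` ball of volume `∏ (2 R ^ (1 / q) / a i) * V_q(1)`.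
Finally `a i * m ^ (1 / q) = ε (d / d i) ^ (1 / p)` lies in `[ε, 1]`, which gives both
`∑ a i ^ q ≤ 1` and the bound `(4 e R / ε) ^ m`.
-/

lemma abs_sign_mul_abs_rpow {r : ℝ} (hr : r ≠ 0) (t : ℝ) :
    |Real.sign t * |t| ^ r| = |t| ^ r := by
  rcases eq_or_ne t 0 with rfl | ht
  · simp [Real.zero_rpow hr]
  · rcases Real.sign_apply_eq_of_ne_zero t ht with h | h <;>
      simp [h, abs_of_nonneg (Real.rpow_nonneg (abs_nonneg t) r)]

lemma sign_mul_abs_rpow_inv_sign_mul_abs_rpow {r : ℝ} (hr : r ≠ 0) (t : ℝ) :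
    Real.sign (Real.sign t * |t| ^ r) * |Real.sign t * |t| ^ r| ^ r⁻¹ = t := by
  rw [abs_sign_mul_abs_rpow hr, Real.rpow_rpow_inv (abs_nonneg t) hr]
  rcases lt_trichotomy t 0 with ht | rfl | ht
  · have hpos : 0 < |t| ^ r := Real.rpow_pos_of_pos (abs_pos.2 ht.ne) r
    rw [Real.sign_of_neg ht, Real.sign_of_neg (by linarith), abs_of_neg ht]
    ring
  · simp
  · have hpos : 0 < |t| ^ r := Real.rpow_pos_of_pos (abs_pos.2 ht.ne') r
    rw [Real.sign_of_pos ht, Real.sign_of_pos (by linarith), abs_of_pos ht, one_mul]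

lemma abs_rpow_mul_eq_abs_mul_rpow_inv_mul_rpow {r q t c u w : ℝ} (hr : r ≠ 0) (hq : q ≠ 0)
    (hw : 0 ≤ w) (h : Real.sign t * |t| ^ r = c * u) :
    |t| ^ (r * q) * w = |c * w ^ q⁻¹ * u| ^ q := by
  rw [mul_right_comm, abs_mul, ← h, abs_sign_mul_abs_rpow hr, abs_of_nonneg (Real.rpow_nonneg hw _),
    Real.mul_rpow (Real.rpow_nonneg (abs_nonneg t) r) (Real.rpow_nonneg hw _),
    ← Real.rpow_mul (abs_nonneg t), Real.rpow_inv_rpow hw hq]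

section

variable {ι : Type*} [Fintype ι]

lemma setOf_sign_mul_abs_rpow_eq_mul_int_subset_image {r q s B : ℝ}
    (hr : r ≠ 0) (hq : q ≠ 0) (hrq : r * q = s) (c w : ι → ℝ) (hw : ∀ i, 0 ≤ w i) :
    {x : ι → ℝ | (∀ i, ∃ z : ℤ, Real.sign (x i) * |x i| ^ r = c i * z) ∧
        ∑ i, |x i| ^ s * w i ≤ B} ⊆
      (fun z i => Real.sign (c i * z i) * |c i * z i| ^ r⁻¹) ''
        {z : ι → ℤ | ∑ i, |c i * w i ^ q⁻¹ * z i| ^ q ≤ B} := by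
  rintro x ⟨hx, hxB⟩
  choose z hz using hx
  refine ⟨z, le_of_eq_of_le (sum_congr rfl fun i _ => ?_) hxB, funext fun i => ?_⟩
  · rw [← hrq, abs_rpow_mul_eq_abs_mul_rpow_inv_mul_rpow hr hq (hw i) (hz i)]
  · dsimp only
    rw [← hz i, sign_mul_abs_rpow_inv_sign_mul_abs_rpow hr]

lemma finite_setOf_sum_abs_mul_rpow_le {a : ι → ℝ} (ha : ∀ i, 0 < a i) {q : ℝ} (hq : 0 < q)
    (R : ℝ) : {z : ι → ℤ | ∑ i, |a i * z i| ^ q ≤ R}.Finite := by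
  refine (Set.Finite.pi fun i =>
    (isCompact_closedBall (0 : ℤ) (R ^ q⁻¹ / a i)).finite_of_discrete).subset fun z hz => ?_
  simp only [Set.mem_pi, Set.mem_univ, Metric.mem_closedBall, Int.dist_eq, Int.cast_zero,
    sub_zero, forall_const]
  intro i
  have hterm : |a i * z i| ^ q ≤ R :=
    (single_le_sum (f := fun j => |a j * z j| ^ q)
      (fun j _ => Real.rpow_nonneg (abs_nonneg _) q) (mem_univ i)).trans hz
  have hR : 0 ≤ R := (Real.rpow_nonneg (abs_nonneg _) q).trans hterm
  rw [le_div_iff₀ (ha i), mul_comm, ← abs_of_pos (ha i), ← abs_mul]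
  exact (Real.le_rpow_inv_iff_of_pos (abs_nonneg _) hR hq).2 hterm

lemma card_le_volume_of_unit_cubes_subset (F : Finset (ι → ℤ)) {A : Set (ι → ℝ)}
    (hA : ∀ z ∈ F, Set.univ.pi (fun i => Set.Ico (z i : ℝ) (z i + 1)) ⊆ A) :
    (#F : ENNReal) ≤ volume A := by
  set cube : (ι → ℤ) → Set (ι → ℝ) := fun z => Set.univ.pi fun i => Set.Ico (z i : ℝ) (z i + 1)
  have hdisj : (F : Set (ι → ℤ)).PairwiseDisjoint cube := by
    intro z _ z' _ hne
    refine Set.disjoint_left.2 fun w hw hw' => hne (funext fun i => ?_)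
    have h := hw i (Set.mem_univ i)
    have h' := hw' i (Set.mem_univ i)
    rw [← Int.floor_eq_iff.2 ⟨h.1, by exact_mod_cast h.2⟩,
      Int.floor_eq_iff.2 ⟨h'.1, by exact_mod_cast h'.2⟩]
  calc (#F : ENNReal) = ∑ z ∈ F, volume (cube z) := by simp [cube, Real.volume_pi_Ico]
    _ = volume (⋃ z ∈ F, cube z) :=
      (measure_biUnion_finset hdisj fun _ _ => .univ_pi fun _ => measurableSet_Ico).symm
    _ ≤ volume A := measure_mono (Set.iUnion₂_subset hA)

lemma volume_setOf_sum_abs_mul_rpow_le {a : ι → ℝ} (ha : ∀ i, 0 < a i) {q r : ℝ} (hr : 0 < r) :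
    volume {w : ι → ℝ | ∑ i, |a i * w i| ^ q ≤ r ^ q} =
      ENNReal.ofReal (∏ i, r / a i) * volume {w : ι → ℝ | ∑ i, |w i| ^ q ≤ 1} := by
  classical
  set L := Matrix.toLin' (Matrix.diagonal fun i => a i / r)
  have hdet : LinearMap.det L = ∏ i, a i / r := by
    rw [LinearMap.det_toLin', Matrix.det_diagonal]
  have hpre : {w : ι → ℝ | ∑ i, |a i * w i| ^ q ≤ r ^ q} =
      L ⁻¹' {w : ι → ℝ | ∑ i, |w i| ^ q ≤ 1} := by
    ext w
    have hrq : 0 < r ^ q := Real.rpow_pos_of_pos hr q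
    simp only [Set.mem_ofPred_eq, Set.mem_preimage, L, Matrix.toLin'_apply,
      Matrix.mulVec_diagonal, div_mul_eq_mul_div, abs_div, abs_of_pos hr,
      Real.div_rpow (abs_nonneg _) hr.le, ← Finset.sum_div, div_le_one hrq]
  have hpos : 0 < ∏ i, a i / r := prod_pos fun i _ => div_pos (ha i) hr
  rw [hpre, Measure.addHaar_preimage_linearMap _ (hdet ▸ hpos.ne'), hdet,
    abs_of_pos (inv_pos.2 hpos), ← prod_inv_distrib]
  simp only [inv_div]

lemma sum_abs_mul_rpow_le_of_mem_unit_cube {a : ι → ℝ} (ha : ∀ i, 0 ≤ a i) {q R : ℝ}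
    (hq : 1 ≤ q) (hR : 1 ≤ R) (ha1 : ∑ i, a i ^ q ≤ 1) {z : ι → ℤ}
    (hz : ∑ i, |a i * z i| ^ q ≤ R) {w : ι → ℝ}
    (hw : w ∈ Set.univ.pi fun i => Set.Ico (z i : ℝ) (z i + 1)) :
    ∑ i, |a i * w i| ^ q ≤ (2 * R ^ q⁻¹) ^ q := by
  have hq0 : 0 < q := one_pos.trans_le hq
  have hfrac : ∑ i, |a i * (w i - z i)| ^ q ≤ 1 := by
    refine le_trans (sum_le_sum fun i _ => ?_) ha1
    have h := hw i (Set.mem_univ i)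
    rw [abs_mul, abs_of_nonneg (ha i), abs_of_nonneg (sub_nonneg.2 h.1)]
    exact Real.rpow_le_rpow (mul_nonneg (ha i) (sub_nonneg.2 h.1))
      (mul_le_of_le_one_right (ha i) (by linarith [h.2])) hq0.le
  have hmink := Real.Lp_add_le univ (fun i => a i * z i) (fun i => a i * (w i - z i)) hq
  simp only [← mul_add, add_sub_cancel, one_div] at hmink
  rw [← Real.rpow_inv_le_iff_of_pos (sum_nonneg fun i _ => Real.rpow_nonneg (abs_nonneg _) q)
    (by positivity) hq0]
  calc (∑ i, |a i * w i| ^ q) ^ q⁻¹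
      ≤ (∑ i, |a i * z i| ^ q) ^ q⁻¹ + (∑ i, |a i * (w i - z i)| ^ q) ^ q⁻¹ := hmink
    _ ≤ R ^ q⁻¹ + 1 := by
      gcongr
      exact Real.rpow_le_one (sum_nonneg fun i _ => Real.rpow_nonneg (abs_nonneg _) q) hfrac
        (inv_nonneg.2 hq0.le)
    _ ≤ 2 * R ^ q⁻¹ := by
      linarith [Real.one_le_rpow hR (inv_nonneg.2 hq0.le)]

lemma ncard_setOf_sum_abs_mul_rpow_le_le {a : ι → ℝ} (ha : ∀ i, 0 < a i) {q R V : ℝ} (hq : 1 ≤ q)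
    (hR : 1 ≤ R) (ha1 : ∑ i, a i ^ q ≤ 1) (hV : 0 ≤ V)
    (hvol : volume {w : ι → ℝ | ∑ i, |w i| ^ q ≤ 1} ≤ ENNReal.ofReal V) :
    ({z : ι → ℤ | ∑ i, |a i * z i| ^ q ≤ R}.ncard : ℝ) ≤ (∏ i, 2 * R ^ q⁻¹ / a i) * V := by
  have hfin := finite_setOf_sum_abs_mul_rpow_le ha (one_pos.trans_le hq) R
  have hprod : 0 ≤ ∏ i, 2 * R ^ q⁻¹ / a i := prod_nonneg fun i _ => by
    have := ha i; have : 0 ≤ R := by linarith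
    positivity
  rw [← ENNReal.toReal_natCast]
  refine ENNReal.toReal_le_of_le_ofReal (mul_nonneg hprod hV) ?_
  rw [Set.ncard_eq_toFinset_card _ hfin, ENNReal.ofReal_mul hprod]
  calc (#hfin.toFinset : ENNReal)
      ≤ volume {w : ι → ℝ | ∑ i, |a i * w i| ^ q ≤ (2 * R ^ q⁻¹) ^ q} :=
        card_le_volume_of_unit_cubes_subset _ fun z hz w hw =>
          sum_abs_mul_rpow_le_of_mem_unit_cube (fun i => (ha i).le) hq hR ha1
            (hfin.mem_toFinset.1 hz) hw
    _ = ENNReal.ofReal (∏ i, 2 * R ^ q⁻¹ / a i) * volume {w : ι → ℝ | ∑ i, |w i| ^ q ≤ 1} :=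
        volume_setOf_sum_abs_mul_rpow_le ha (by positivity)
    _ ≤ ENNReal.ofReal (∏ i, 2 * R ^ q⁻¹ / a i) * ENNReal.ofReal V := mul_le_mul_right hvol _

end

lemma finite_and_natCard_le_of_subset_image {α β : Type*} {S : Set α} {Z : Set β} {f : β → α}
    {B : ℝ} (hZ : Z.Finite) (hSZ : S ⊆ f '' Z) (hB : (Z.ncard : ℝ) ≤ B) :
    S.Finite ∧ (Nat.card S : ℝ) ≤ B := by
  refine ⟨(hZ.image f).subset hSZ, le_trans ?_ hB⟩
  rw [Nat.card_coe_set_eq]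
  exact_mod_cast (Set.ncard_le_ncard hSZ (hZ.image f)).trans (Set.ncard_image_le hZ)

lemma Real.HolderConjugate.rpow_inv_mul_rpow_inv_div {p q : ℝ} (hpq : p.HolderConjugate q)
    {D δ : ℝ} (hD : 0 ≤ D) (hδ : 0 < δ) : D ^ p⁻¹ * δ ^ q⁻¹ / δ = (D / δ) ^ p⁻¹ := by
  have hδpq : δ ^ p⁻¹ * δ ^ q⁻¹ = δ := by
    rw [← Real.rpow_add hδ, hpq.inv_add_inv_eq_one, Real.rpow_one]
  have : δ ^ p⁻¹ ≠ 0 := (Real.rpow_pos_of_pos hδ _).ne'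
  rw [Real.div_rpow hD hδ.le, div_eq_div_iff hδ.ne' this]
  linear_combination D ^ p⁻¹ * hδpq

lemma le_mul_div_rpow_inv_le_one {p ε θ D δ : ℝ} (hp : 1 ≤ p) (hε : 0 < ε) (hεθ : ε * θ ≤ 1)
    (hδ : 0 < δ) (hδD : δ ≤ D) (hDθ : D ≤ θ * δ) :
    ε ≤ ε * (D / δ) ^ p⁻¹ ∧ ε * (D / δ) ^ p⁻¹ ≤ 1 := by
  have h1 : 1 ≤ D / δ := (one_le_div hδ).2 hδD
  refine ⟨le_mul_of_one_le_right hε.le (Real.one_le_rpow h1 (inv_nonneg.2 (by linarith))), ?_⟩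
  calc ε * (D / δ) ^ p⁻¹ ≤ ε * θ := by
        gcongr
        exact (Real.rpow_le_self_of_one_le h1 (inv_le_one_of_one_le₀ hp)).trans
          ((div_le_iff₀ hδ).2 hDθ)
    _ ≤ 1 := hεθ

lemma sum_rpow_le_one_of_mul_rpow_inv_le_one {m : ℕ} {a : Fin m → ℝ} (ha : ∀ i, 0 ≤ a i) {q : ℝ}
    (hq : 0 < q) (h : ∀ i, a i * (m : ℝ) ^ q⁻¹ ≤ 1) : ∑ i, a i ^ q ≤ 1 := by
  rcases m.eq_zero_or_pos with rfl | hm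
  · simp
  have hm' : (0 : ℝ) < m := Nat.cast_pos.2 hm
  have hterm : ∀ i, a i ^ q ≤ (m : ℝ)⁻¹ := fun i => by
    have h' := Real.rpow_le_one (mul_nonneg (ha i) (by positivity)) (h i) hq.le
    rw [Real.mul_rpow (ha i) (by positivity), Real.rpow_inv_rpow hm'.le hq.ne'] at h'
    rwa [← one_div, le_div_iff₀ hm']
  calc ∑ i, a i ^ q ≤ ∑ _i : Fin m, (m : ℝ)⁻¹ := sum_le_sum fun i _ => hterm i
    _ = 1 := by simp [hm'.ne']

lemma prod_two_mul_rpow_inv_div_mul_pow_le {m : ℕ} {a : Fin m → ℝ} {ε M C R q : ℝ} (hε : 0 < ε)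
    (hC : 0 ≤ C) (hR : 1 ≤ R) (hq : 1 ≤ q) (ha : ∀ i, 0 < a i) (haM : ∀ i, ε ≤ a i * M) :
    (∏ i, 2 * R ^ q⁻¹ / a i) * (2 * C / M) ^ m ≤ (4 * C * R / ε) ^ m := by
  rw [← Fin.prod_const, ← Fin.prod_const, ← prod_mul_distrib]
  have hM : ∀ i, 0 < M := fun i => pos_of_mul_pos_right (hε.trans_le (haM i)) (ha i).le
  have hRq : R ^ q⁻¹ ≤ R := Real.rpow_le_self_of_one_le hR (inv_le_one_of_one_le₀ hq)
  refine prod_le_prod (fun i _ => ?_) (fun i _ => ?_)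
  · have := hM i; have := ha i; have : 0 ≤ R := by linarith
    positivity
  · have := hM i; have := ha i
    calc 2 * R ^ q⁻¹ / a i * (2 * C / M) = 4 * C * R ^ q⁻¹ / (a i * M) := by
          field_simp; ring
      _ ≤ 4 * C * R / ε := by gcongr; exact haM i

theorem stmt13_general (m : ℕ) (p θ ε R : ℝ) (hp : 2 ≤ p)
    (hε : 0 < ε) (hεθ : ε * θ ≤ 1) (hR : 1 ≤ R)
    (dvec : Fin m → ℕ) (d : ℕ) (hdpos : ∀ i, 0 < dvec i)
    (hdmax : ∀ i, dvec i ≤ d)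
    (hdmin : ∀ i, (d : ℝ) ≤ θ * (dvec i : ℝ))
    (hvol : volume {z : Fin m → ℝ | ∑ i, |z i| ^ (p / (p - 1)) ≤ 1} ≤
      ENNReal.ofReal ((2 * Real.exp 1 / (m : ℝ) ^ (1 / (p / (p - 1)))) ^ m)) :
    (Set.Finite {x : Fin m → ℝ |
        (∀ i, ∃ z : ℤ, Real.sign (x i) * |x i| ^ (p - 1) =
          ε * (d : ℝ) ^ (1 / p) / ((dvec i : ℝ) * (m : ℝ) ^ (1 / (p / (p - 1)))) * (z : ℝ)) ∧
        (∑ i, Real.sign (x i) * |x i| ^ (p - 1) * (dvec i : ℝ) = 0) ∧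
        (∑ i, |x i| ^ p * (dvec i : ℝ) ≤ R)}) ∧
    (Nat.card {x : Fin m → ℝ |
        (∀ i, ∃ z : ℤ, Real.sign (x i) * |x i| ^ (p - 1) =
          ε * (d : ℝ) ^ (1 / p) / ((dvec i : ℝ) * (m : ℝ) ^ (1 / (p / (p - 1)))) * (z : ℝ)) ∧
        (∑ i, Real.sign (x i) * |x i| ^ (p - 1) * (dvec i : ℝ) = 0) ∧
        (∑ i, |x i| ^ p * (dvec i : ℝ) ≤ R)} : ℝ) ≤ (4 * Real.exp 1 * R / ε) ^ m := by
  set q := p / (p - 1)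
  have hpq : p.HolderConjugate q := .conjExponent (by linarith)
  simp only [one_div] at hvol ⊢
  set c : Fin m → ℝ := fun i => ε * (d : ℝ) ^ p⁻¹ / ((dvec i : ℝ) * (m : ℝ) ^ q⁻¹)
  set a : Fin m → ℝ := fun i => c i * (dvec i : ℝ) ^ q⁻¹
  have hdvec : ∀ i, (0 : ℝ) < dvec i := fun i => Nat.cast_pos.2 (hdpos i)
  have haM : ∀ i, a i * (m : ℝ) ^ q⁻¹ = ε * ((d : ℝ) / dvec i) ^ p⁻¹ := fun i => by
    have hm : (m : ℝ) ^ q⁻¹ ≠ 0 := (Real.rpow_pos_of_pos (Nat.cast_pos.2 (Fin.pos i)) _).ne'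
    rw [← hpq.rpow_inv_mul_rpow_inv_div (Nat.cast_nonneg d) (hdvec i)]
    simp only [a, c]
    rw [div_mul_eq_mul_div, div_mul_eq_mul_div, mul_div_mul_right _ _ hm]
    ring
  have hbounds := fun i => le_mul_div_rpow_inv_le_one (p := p) (by linarith) hε hεθ (hdvec i)
    (Nat.cast_le.2 (hdmax i)) (hdmin i)
  have ha : ∀ i, 0 < a i := fun i => pos_of_mul_pos_left
    ((haM i).symm ▸ hε.trans_le (hbounds i).1) (Real.rpow_nonneg (Nat.cast_nonneg m) _)
  set Z := {z : Fin m → ℤ | ∑ i, |a i * z i| ^ q ≤ R}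
  have hZ : Z.Finite := finite_setOf_sum_abs_mul_rpow_le ha hpq.symm.pos R
  refine finite_and_natCard_le_of_subset_image hZ
    (subset_trans (fun _ hx => by exact ⟨hx.1, hx.2.2⟩)
      (setOf_sign_mul_abs_rpow_eq_mul_int_subset_image hpq.sub_one_ne_zero hpq.symm.ne_zero
        hpq.sub_one_mul_conj c (fun i => dvec i) fun i => (hdvec i).le)) ?_
  calc (Z.ncard : ℝ) ≤ (∏ i, 2 * R ^ q⁻¹ / a i) * (2 * Real.exp 1 / (m : ℝ) ^ q⁻¹) ^ m :=
        ncard_setOf_sum_abs_mul_rpow_le_le ha hpq.symm.lt.le hR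
          (sum_rpow_le_one_of_mul_rpow_inv_le_one (fun i => (ha i).le) hpq.symm.pos
            fun i => (haM i).trans_le (hbounds i).2) (by positivity) hvol
    _ ≤ (4 * Real.exp 1 * R / ε) ^ m := prod_two_mul_rpow_inv_div_mul_pow_le hε
        (Real.exp_pos 1).le hR hpq.symm.lt.le ha fun i => (haM i).symm ▸ (hbounds i).1

/-- Size of the net T_{p,d,R}: under the stated hypotheses (including the
ℓ^q-ball volume bound V_q(1) ≤ (2e/m^{1/q})^m, valid for m large), the set of
x ∈ ℝ^m with sign(x_i)|x_i|^{p-1} ∈ (ε d^{1/p}/(d_i m^{1/q}))·ℤ for each i,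
Σ_i sign(x_i)|x_i|^{p-1} d_i = 0 and Σ_i |x_i|^p d_i ≤ R, is finite with
cardinality at most (4eR/ε)^m.  Here q = p/(p-1). -/
theorem stmt13 (m : ℕ) (p θ ε R : ℝ) (hp : 2 ≤ p) (hθ : 1 ≤ θ)
    (hε : 0 < ε) (hεθ : ε * θ ≤ 1) (hR : 1 ≤ R)
    (dvec : Fin m → ℕ) (d : ℕ) (hdpos : ∀ i, 0 < dvec i)
    (hdmax : ∀ i, dvec i ≤ d) (hdtop : ∃ i, dvec i = d)
    (hdmin : ∀ i, (d : ℝ) ≤ θ * (dvec i : ℝ))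
    (hvol : volume {z : Fin m → ℝ | ∑ i, |z i| ^ (p / (p - 1)) ≤ 1} ≤
      ENNReal.ofReal ((2 * Real.exp 1 / (m : ℝ) ^ (1 / (p / (p - 1)))) ^ m)) :
    (Set.Finite {x : Fin m → ℝ |
        (∀ i, ∃ z : ℤ, Real.sign (x i) * |x i| ^ (p - 1) =
          ε * (d : ℝ) ^ (1 / p) / ((dvec i : ℝ) * (m : ℝ) ^ (1 / (p / (p - 1)))) * (z : ℝ)) ∧
        (∑ i, Real.sign (x i) * |x i| ^ (p - 1) * (dvec i : ℝ) = 0) ∧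
        (∑ i, |x i| ^ p * (dvec i : ℝ) ≤ R)}) ∧
    (Nat.card {x : Fin m → ℝ |
        (∀ i, ∃ z : ℤ, Real.sign (x i) * |x i| ^ (p - 1) =
          ε * (d : ℝ) ^ (1 / p) / ((dvec i : ℝ) * (m : ℝ) ^ (1 / (p / (p - 1)))) * (z : ℝ)) ∧
        (∑ i, Real.sign (x i) * |x i| ^ (p - 1) * (dvec i : ℝ) = 0) ∧
        (∑ i, |x i| ^ p * (dvec i : ℝ) ≤ R)} : ℝ) ≤ (4 * Real.exp 1 * R / ε) ^ m :=
  stmt13_general m p θ ε R hp hε hεθ hR dvec d hdpos hdmax hdmin hvol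
end

section
/- Let p ≥ 2 and q = p/(p-1). For every real c ∈ (0,1] and p ≥ 3, one has (1+c)^p ≥ 1 + pc + p·c^{p-1} + c^p. -/
open Real

/-- For p ≥ 3 and c ∈ (0,1]: (1+c)^p ≥ 1 + p·c + p·c^{p-1} + c^p. -/
theorem stmt17 (p : ℝ) (hp : 3 ≤ p) (c : ℝ) (hc0 : 0 < c) (hc1 : c ≤ 1) :
    1 + p * c + p * c ^ (p - 1) + c ^ p ≤ (1 + c) ^ p := by
  have hc0' : (0:ℝ) ≤ c := hc0.le
  -- Bernoulli with exponent p/3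
  have hB : 1 + (p/3) * c ≤ (1 + c) ^ (p/3) :=
    one_add_mul_self_le_rpow_one_add (by linarith) (by linarith)
  have hbase : (0:ℝ) ≤ 1 + (p/3) * c := by nlinarith
  have hkey : (1 + (p/3) * c) ^ (3:ℕ) ≤ (1 + c) ^ p := by
    calc (1 + (p/3) * c) ^ (3:ℕ) ≤ ((1 + c) ^ (p/3)) ^ (3:ℕ) :=
          pow_le_pow_left₀ hbase hB 3
      _ = (1 + c) ^ p := by
          rw [← Real.rpow_natCast ((1+c) ^ (p/3)) 3, ← Real.rpow_mul (by linarith)]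
          norm_num
  have h1 : c ^ (p - 1) ≤ c ^ (2:ℝ) :=
    Real.rpow_le_rpow_of_exponent_ge hc0 hc1 (by linarith)
  have h2 : c ^ p ≤ c ^ (3:ℝ) :=
    Real.rpow_le_rpow_of_exponent_ge hc0 hc1 (by linarith)
  have e1 : c ^ (2:ℝ) = c ^ (2:ℕ) := by rw [← Real.rpow_natCast]; norm_num
  have e2 : c ^ (3:ℝ) = c ^ (3:ℕ) := by rw [← Real.rpow_natCast]; norm_num
  rw [e1] at h1; rw [e2] at h2
  have hexp : (1 + (p/3) * c) ^ (3:ℕ)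
      = 1 + p * c + (p^2/3) * c^(2:ℕ) + (p^3/27) * c^(3:ℕ) := by ring
  have hA : p * c ^ (p-1) ≤ p * c^(2:ℕ) :=
    mul_le_mul_of_nonneg_left h1 (by linarith)
  have hB2 : (0:ℝ) ≤ (p - 3) * c^(2:ℕ) * (p/3) :=
    mul_nonneg (mul_nonneg (by linarith) (pow_nonneg hc0' 2)) (by linarith)
  have hC : (1:ℝ) ≤ p^3/27 := by nlinarith
  have hD : c^(3:ℕ) ≤ (p^3/27) * c^(3:ℕ) :=
    le_mul_of_one_le_left (pow_nonneg hc0' 3) hC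
  nlinarith [pow_nonneg hc0' 2, pow_nonneg hc0' 3]
end
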